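/- Let C be a channel from a finite set X to a finite set Y, let π be a prior on X, and let Obs₁ : Y → Z₁ and Obs₂ : Y → Z₂ be observers such that Obs₁ is composition-refined by Obs₂ (there exists a channel R : Z₂ → Z₁ with Obs₁ = Obs₂ · R). Then the observed min-entropy leakage satisfies L(π, C·Obs₁) ≤ L(π, C·Obs₂); equivalently, V(π, C·Obs₁) ≤ V(π, C·Obs₂). -/
import Mathlib


open scoped Classical BigOperators

noncomputable section

/-- A (row-stochastic) channel matrix. -/
def IsChannel {X Y : Type*} [Fintype Y] (C : X → Y → ℝ) : Prop :=
  (∀ x y, 0 ≤ C x y) ∧ ∀ x, ∑ y, C x y = 1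

/-- A prior (probability distribution). -/
def IsPrior {X : Type*} [Fintype X] (π : X → ℝ) : Prop :=
  (∀ x, 0 ≤ π x) ∧ ∑ x, π x = 1

/-- Cascade composition of channels (matrix product). -/
def cascade {X Y Z : Type*} [Fintype Y] (C : X → Y → ℝ) (D : Y → Z → ℝ) : X → Z → ℝ :=
  fun x z => ∑ y, C x y * D y z

/-- Mutual information (base-2), with `0`-probability terms taken to be `0`. -/
def MI {X Y : Type*} [Fintype X] [Fintype Y] (π : X → ℝ) (C : X → Y → ℝ) : ℝ :=
  ∑ x, ∑ y, if π x * C x y = 0 then 0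
    else π x * C x y * Real.logb 2 (C x y / ∑ x', π x' * C x' y)

/-- Prior vulnerability. -/
def Vprior {X : Type*} [Fintype X] [Nonempty X] (π : X → ℝ) : ℝ :=
  Finset.univ.sup' Finset.univ_nonempty π

/-- Posterior vulnerability. -/
def Vpost {X Y : Type*} [Fintype X] [Nonempty X] [Fintype Y]
    (π : X → ℝ) (C : X → Y → ℝ) : ℝ :=
  ∑ y, Finset.univ.sup' Finset.univ_nonempty (fun x => π x * C x y)

/-- Min-entropy leakage. -/
def MEL {X Y : Type*} [Fintype X] [Nonempty X] [Fintype Y]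
    (π : X → ℝ) (C : X → Y → ℝ) : ℝ :=
  Real.logb 2 (Vpost π C) - Real.logb 2 (Vprior π)

/-- Min-capacity: supremum of min-entropy leakage over all priors. -/
def MinCap {X Y : Type*} [Fintype X] [Nonempty X] [Fintype Y] (C : X → Y → ℝ) : ℝ :=
  sSup {l : ℝ | ∃ π : X → ℝ, IsPrior π ∧ l = MEL π C}

/-- A deterministic observer: every matrix entry is `0` or `1`. -/
def IsDeterministic {Y Z : Type*} (Obs : Y → Z → ℝ) : Prop :=
  ∀ y z, Obs y z = 0 ∨ Obs y z = 1

/-- A `∼`-observer for the relation `r`. -/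
def IsSimObserver {Y Z : Type*} (r : Y → Y → Prop) (Obs : Y → Z → ℝ) : Prop :=
  ∀ y₁ y₂, r y₁ y₂ ↔ ∀ z, Obs y₁ z = Obs y₂ z

lemma cascade_assoc {X Y Z W : Type*} [Fintype Y] [Fintype Z]
    (C : X → Y → ℝ) (D : Y → Z → ℝ) (E : Z → W → ℝ) :
    cascade C (cascade D E) = cascade (cascade C D) E := by
  funext x w
  simp only [cascade, Finset.sum_mul, Finset.mul_sum, mul_assoc]
  rw [Finset.sum_comm]

lemma Vpost_cascade_le {X Y Z : Type*} [Fintype X] [Nonempty X] [Fintype Y] [Fintype Z]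
    (π : X → ℝ) (A : X → Y → ℝ) (R : Y → Z → ℝ) (hR : IsChannel R) :
    Vpost π (cascade A R) ≤ Vpost π A := by
  unfold Vpost cascade
  calc ∑ z, Finset.univ.sup' Finset.univ_nonempty (fun x => π x * ∑ y, A x y * R y z)
      ≤ ∑ z, ∑ y, (Finset.univ.sup' Finset.univ_nonempty (fun x => π x * A x y)) * R y z := by
        apply Finset.sum_le_sum
        intro z _
        apply Finset.sup'_le
        intro x _
        rw [Finset.mul_sum]
        apply Finset.sum_le_sum
        intro y _
        rw [← mul_assoc]
        exact mul_le_mul_of_nonneg_right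
          (Finset.le_sup' (fun x => π x * A x y) (Finset.mem_univ x)) (hR.1 y z)
    _ = ∑ y, (Finset.univ.sup' Finset.univ_nonempty (fun x => π x * A x y)) * ∑ z, R y z := by
        rw [Finset.sum_comm]; simp [Finset.mul_sum]
    _ = ∑ y, Finset.univ.sup' Finset.univ_nonempty (fun x => π x * A x y) := by
        simp [hR.2]

lemma Vpost_pos {X Y : Type*} [Fintype X] [Nonempty X] [Fintype Y]
    (π : X → ℝ) (hπ : IsPrior π) (C : X → Y → ℝ) (hC : IsChannel C) :
    0 < Vpost π C := by
  obtain ⟨x₀, hx₀⟩ : ∃ x, 0 < π x := by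
    by_contra h
    push_neg at h
    have : ∑ x, π x = 0 := le_antisymm (Finset.sum_nonpos fun x _ => h x)
      (Finset.sum_nonneg fun x _ => hπ.1 x)
    rw [hπ.2] at this; norm_num at this
  have : (0:ℝ) < ∑ y, π x₀ * C x₀ y := by
    rw [← Finset.mul_sum, hC.2]; simpa using hx₀
  calc (0:ℝ) < ∑ y, π x₀ * C x₀ y := this
    _ ≤ Vpost π C :=
      Finset.sum_le_sum fun y _ =>
        Finset.le_sup' (fun x => π x * C x y) (Finset.mem_univ x₀)

lemma cascade_isChannel {X Y Z : Type*} [Fintype Y] [Fintype Z]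
    (C : X → Y → ℝ) (D : Y → Z → ℝ) (hC : IsChannel C) (hD : IsChannel D) :
    IsChannel (cascade C D) := by
  constructor
  · intro x z
    exact Finset.sum_nonneg fun y _ => mul_nonneg (hC.1 x y) (hD.1 y z)
  · intro x
    unfold cascade
    rw [Finset.sum_comm]
    simp [← Finset.mul_sum, hD.2, hC.2]

/-- a composition-refined observer observes no more min-entropy
leakage; equivalently, no larger posterior vulnerability. -/
theorem refined_observer_MEL_le
    {X Y Z₁ Z₂ : Type*} [Fintype X] [Nonempty X] [Fintype Y] [Fintype Z₁] [Fintype Z₂]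
    (C : X → Y → ℝ) (hC : IsChannel C)
    (π : X → ℝ) (hπ : IsPrior π)
    (Obs₁ : Y → Z₁ → ℝ) (Obs₂ : Y → Z₂ → ℝ)
    (hO₁ : IsChannel Obs₁) (hO₂ : IsChannel Obs₂)
    (href : ∃ R : Z₂ → Z₁ → ℝ, IsChannel R ∧ Obs₁ = cascade Obs₂ R) :
    MEL π (cascade C Obs₁) ≤ MEL π (cascade C Obs₂) ∧
      Vpost π (cascade C Obs₁) ≤ Vpost π (cascade C Obs₂) := by
  obtain ⟨R, hR, hEq⟩ := href
  have hV : Vpost π (cascade C Obs₁) ≤ Vpost π (cascade C Obs₂) := by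
    rw [hEq, cascade_assoc]
    exact Vpost_cascade_le π (cascade C Obs₂) R hR
  refine ⟨?_, hV⟩
  unfold MEL
  have hpos : 0 < Vpost π (cascade C Obs₁) :=
    Vpost_pos π hπ _ (cascade_isChannel C Obs₁ hC hO₁)
  have := Real.logb_le_logb_of_le (b := 2) (by norm_num) hpos hV
  linarith
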